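/- arXiv:0912.5314 — 3 statements merged into one kernel-verified Lean document; each statement's English description precedes it below -/
import Mathlib

section
/- Let (Φ, F+η) be a generalized almost contact pair on V. Then L := ℂ·F ⊕ E^{1,0} and L* := ℂ·η ⊕ E^{0,1} are both maximally isotropic subspaces of (V⊕V*)_ℂ with respect to the pairing, i.e. each is isotropic of complex dimension equal to dim V. -/
/-!
On `K = ker η ∩ ker F` the endomorphism `Φ` is a complex structure, skew for the pairing and
hence an isometry, so expanding `⟨e - iΦe, f - iΦf⟩` the cross terms cancel and
`⟨e, f⟩ - ⟨Φe, Φf⟩ = 0`: `E^{1,0}` is isotropic. Skewness against `Φ F = Φ η = 0` puts the image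
of `Φ` inside `K`, and `F` pairs trivially with itself and with `K`, so `L` is isotropic. For the
dimension, `e ↦ e - iΦe` is an `ℝ`-linear bijection from `K` onto `E^{1,0}` turning `Φ` into
multiplication by `i`, so `dim_ℂ E^{1,0} = dim_ℝ K / 2 = dim V - 1`, and `F ∉ K` adds one
dimension. The same argument applies to `L*`, since `E^{0,1}` is the `E^{1,0}` of `-Φ`.
-/

open TensorProduct

/-- Evaluation `(X,α) ↦ η(X)` on the double `V ⊕ V*`. -/
noncomputable def gcEta {V : Type*} [AddCommGroup V] [Module ℝ V] (η : (V →ₗ[ℝ] ℝ)) :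
    (V × (V →ₗ[ℝ] ℝ)) →ₗ[ℝ] ℝ :=
  η.comp (LinearMap.fst ℝ V ((V →ₗ[ℝ] ℝ)))

/-- Evaluation `(X,α) ↦ α(F)` on the double `V ⊕ V*`. -/
noncomputable def gcF {V : Type*} [AddCommGroup V] [Module ℝ V] (F : V) :
    (V × (V →ₗ[ℝ] ℝ)) →ₗ[ℝ] ℝ :=
  (LinearMap.applyₗ F).comp (LinearMap.snd ℝ V ((V →ₗ[ℝ] ℝ)))

/-- The complexification of `ker η ⊕ ker F` inside `(V ⊕ V*) ⊗ ℂ`. -/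
noncomputable def gcKerC {V : Type*} [AddCommGroup V] [Module ℝ V]
    (F : V) (η : (V →ₗ[ℝ] ℝ)) : Submodule ℂ (ℂ ⊗[ℝ] (V × (V →ₗ[ℝ] ℝ))) :=
  (LinearMap.ker (gcEta η) ⊓ LinearMap.ker (gcF F)).baseChange ℂ

/-- The map `e ↦ e − iΦ(e)` on the complexified double. -/
noncomputable def gcProj10 {V : Type*} [AddCommGroup V] [Module ℝ V]
    (Φ : (V × (V →ₗ[ℝ] ℝ)) →ₗ[ℝ] (V × (V →ₗ[ℝ] ℝ))) :
    (ℂ ⊗[ℝ] (V × (V →ₗ[ℝ] ℝ))) →ₗ[ℂ] (ℂ ⊗[ℝ] (V × (V →ₗ[ℝ] ℝ))) :=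
  (LinearMap.id : (ℂ ⊗[ℝ] (V × (V →ₗ[ℝ] ℝ))) →ₗ[ℂ] ℂ ⊗[ℝ] (V × (V →ₗ[ℝ] ℝ))) -
    Complex.I • (Φ.baseChange ℂ)

/-- The map `e ↦ e + iΦ(e)` on the complexified double. -/
noncomputable def gcProj01 {V : Type*} [AddCommGroup V] [Module ℝ V]
    (Φ : (V × (V →ₗ[ℝ] ℝ)) →ₗ[ℝ] (V × (V →ₗ[ℝ] ℝ))) :
    (ℂ ⊗[ℝ] (V × (V →ₗ[ℝ] ℝ))) →ₗ[ℂ] (ℂ ⊗[ℝ] (V × (V →ₗ[ℝ] ℝ))) :=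
  (LinearMap.id : (ℂ ⊗[ℝ] (V × (V →ₗ[ℝ] ℝ))) →ₗ[ℂ] ℂ ⊗[ℝ] (V × (V →ₗ[ℝ] ℝ))) +
    Complex.I • (Φ.baseChange ℂ)

/-- `E^{1,0} = { e − iΦ(e) : e ∈ (ker η ⊕ ker F)_ℂ }`. -/
noncomputable def gcE10 {V : Type*} [AddCommGroup V] [Module ℝ V]
    (Φ : (V × (V →ₗ[ℝ] ℝ)) →ₗ[ℝ] (V × (V →ₗ[ℝ] ℝ))) (F : V) (η : (V →ₗ[ℝ] ℝ)) :
    Submodule ℂ (ℂ ⊗[ℝ] (V × (V →ₗ[ℝ] ℝ))) :=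
  Submodule.map (gcProj10 Φ) (gcKerC F η)

/-- `E^{0,1} = { e + iΦ(e) : e ∈ (ker η ⊕ ker F)_ℂ }`. -/
noncomputable def gcE01 {V : Type*} [AddCommGroup V] [Module ℝ V]
    (Φ : (V × (V →ₗ[ℝ] ℝ)) →ₗ[ℝ] (V × (V →ₗ[ℝ] ℝ))) (F : V) (η : (V →ₗ[ℝ] ℝ)) :
    Submodule ℂ (ℂ ⊗[ℝ] (V × (V →ₗ[ℝ] ℝ))) :=
  Submodule.map (gcProj01 Φ) (gcKerC F η)

open Module

theorem LinearMap.BilinForm.apply_eq_zero_of_mem_span {R M : Type*} [CommSemiring R]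
    [AddCommMonoid M] [Module R M] (B : LinearMap.BilinForm R M) {S : Set M}
    (hS : ∀ p ∈ S, ∀ q ∈ S, B p q = 0)
    {u v : M} (hu : u ∈ Submodule.span R S) (hv : v ∈ Submodule.span R S) : B u v = 0 := by
  induction hu using Submodule.span_induction with
  | mem p hp =>
    induction hv using Submodule.span_induction with
    | mem q hq => exact hS p hp q hq
    | zero => simp
    | add _ _ _ _ h₁ h₂ => simp [h₁, h₂]
    | smul _ _ _ h => simp [h]
  | zero => simp
  | add _ _ _ _ h₁ h₂ => simp [h₁, h₂]
  | smul _ _ _ h => simp [h]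

theorem Submodule.restrictScalars_span_eq_of_I_smul_mem {M : Type*} [AddCommGroup M]
    [Module ℝ M] [Module ℂ M] [IsScalarTower ℝ ℂ M] (N : Submodule ℝ M)
    (hN : ∀ x ∈ N, Complex.I • x ∈ N) :
    (Submodule.span ℂ (N : Set M)).restrictScalars ℝ = N := by
  refine le_antisymm (fun u hu => ?_) Submodule.subset_span
  induction hu using Submodule.span_induction with
  | mem x hx => exact hx
  | zero => exact N.zero_mem
  | add _ _ _ _ h₁ h₂ => exact N.add_mem h₁ h₂
  | smul z x _ hx =>
    rw [← Complex.re_add_im z, add_smul, mul_smul, ← Complex.coe_algebraMap, algebraMap_smul,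
      algebraMap_smul]
    exact N.add_mem (N.smul_mem _ hx) (N.smul_mem _ (hN _ hx))

theorem Submodule.tmul_mem_baseChange_iff_of_notMem {k A M : Type*} [Field k] [CommRing A]
    [Algebra k A] [AddCommGroup M] [Module k M] {K : Submodule k M} {x : M} (hx : x ∉ K)
    (z : A) : z ⊗ₜ[k] x ∈ K.baseChange A ↔ z = 0 := by
  refine ⟨fun hz => ?_, fun hz => by simp [hz]⟩
  obtain ⟨f, hfx, hfK⟩ := K.exists_dual_map_eq_bot_of_notMem hx inferInstance
  have hK : K.baseChange A ≤ LinearMap.ker (f.baseChange A) := by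
    rw [Submodule.baseChange_eq_span, Submodule.span_le]
    rintro - ⟨e, he, rfl⟩
    have : f e = 0 := by simpa [hfK] using Submodule.mem_map_of_mem (f := f) he
    simp [Dual.baseChange_apply_tmul, this]
  have : f x = 0 ∨ z = 0 := by simpa [Dual.baseChange_apply_tmul] using hK hz
  exact this.resolve_left hfx

theorem finrank_ker_inf_ker_add_two {k M : Type*} [Field k] [AddCommGroup M] [Module k M]
    [FiniteDimensional k M] {f g : M →ₗ[k] k} {a b : M} (hfa : f a = 1) (hga : g a = 0)
    (hfb : f b = 0) (hgb : g b = 1) :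
    finrank k ↥(LinearMap.ker f ⊓ LinearMap.ker g) + 2 = finrank k M := by
  have hsurj : Function.Surjective (f.prod g) := fun p =>
    ⟨p.1 • a + p.2 • b, by simp [hfa, hga, hfb, hgb]⟩
  have := LinearMap.finrank_range_add_finrank_ker (f.prod g)
  rw [LinearMap.range_eq_top.mpr hsurj, finrank_top, LinearMap.ker_prod, Module.finrank_prod,
    Module.finrank_self] at this
  omega

section Complexification

variable {W : Type*} [AddCommGroup W] [Module ℝ W]

noncomputable def proj10 (Φ : W →ₗ[ℝ] W) : ℂ ⊗[ℝ] W →ₗ[ℂ] ℂ ⊗[ℝ] W :=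
  LinearMap.id - Complex.I • Φ.baseChange ℂ

noncomputable def subspace10 (Φ : W →ₗ[ℝ] W) (K : Submodule ℝ W) : Submodule ℂ (ℂ ⊗[ℝ] W) :=
  (K.baseChange ℂ).map (proj10 Φ)

variable {Φ : W →ₗ[ℝ] W} {K : Submodule ℝ W} {B : LinearMap.BilinForm ℝ W} {x : W}

theorem proj10_tmul (Φ : W →ₗ[ℝ] W) (z : ℂ) (e : W) :
    proj10 Φ (z ⊗ₜ e) = z ⊗ₜ e - (Complex.I * z) ⊗ₜ Φ e := by
  simp [proj10, LinearMap.baseChange_tmul, smul_tmul']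

theorem subspace10_eq_span (Φ : W →ₗ[ℝ] W) (K : Submodule ℝ W) :
    subspace10 Φ K = Submodule.span ℂ ((fun e => proj10 Φ (1 ⊗ₜ e)) '' K) := by
  rw [subspace10, Submodule.baseChange_eq_span, Submodule.map_span, Submodule.map_coe,
    Set.image_image]
  rfl

theorem subspace10_le_baseChange (hΦK : ∀ e ∈ K, Φ e ∈ K) :
    subspace10 Φ K ≤ K.baseChange ℂ := by
  rw [subspace10_eq_span, Submodule.span_le]
  rintro - ⟨e, he, rfl⟩
  change proj10 Φ (1 ⊗ₜ e) ∈ K.baseChange ℂ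
  rw [proj10_tmul]
  exact sub_mem (K.tmul_mem_baseChange_of_mem _ he) (K.tmul_mem_baseChange_of_mem _ (hΦK e he))

theorem baseChange_proj10_proj10_eq_zero (hskew : ∀ u v, B (Φ u) v + B u (Φ v) = 0) {f : W}
    (hf : Φ (Φ f) = -f) (e : W) :
    B.baseChange ℂ (proj10 Φ (1 ⊗ₜ e)) (proj10 Φ (1 ⊗ₜ f)) = 0 := by
  have hΦΦ : B (Φ e) (Φ f) = B e f := by
    have := hskew e (Φ f)
    rw [hf, LinearMap.map_neg] at this
    linarith
  have hΦ : B (Φ e) f = - B e (Φ f) := by linarith [hskew e f]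
  simp only [proj10_tmul, map_sub, LinearMap.sub_apply, LinearMap.BilinForm.baseChange_tmul,
    hΦΦ, hΦ]
  simp only [mul_one, one_mul, Complex.I_mul_I]
  module

theorem I_smul_proj10_tmul {f : W} (hf : Φ (Φ f) = -f) :
    Complex.I • proj10 Φ (1 ⊗ₜ f) = proj10 Φ (1 ⊗ₜ Φ f) := by
  rw [proj10_tmul, proj10_tmul, hf, smul_sub, smul_tmul', smul_tmul', smul_eq_mul, smul_eq_mul,
    mul_one]
  simp only [Complex.I_mul_I, neg_tmul, tmul_neg]
  abel

theorem finrank_eq_two_mul_finrank_subspace10 [FiniteDimensional ℝ W]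
    (hΦK : ∀ e ∈ K, Φ e ∈ K) (hΦ2 : ∀ e ∈ K, Φ (Φ e) = -e) :
    finrank ℝ K = 2 * finrank ℂ (subspace10 Φ K) := by
  let ψ : K →ₗ[ℝ] ℂ ⊗[ℝ] W :=
    (proj10 Φ).restrictScalars ℝ ∘ₗ TensorProduct.mk ℝ ℂ W 1 ∘ₗ K.subtype
  have hψ : ∀ e : K, ψ e = proj10 Φ (1 ⊗ₜ (e : W)) := fun _ => rfl
  let re : ℂ ⊗[ℝ] W →ₗ[ℝ] W := (TensorProduct.lid ℝ W).toLinearMap ∘ₗ Complex.reLm.rTensor W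
  have hψ_inj : Function.Injective ψ := by
    refine (injective_iff_map_eq_zero ψ).mpr fun e he => Subtype.ext ?_
    simpa [hψ, proj10_tmul, re] using congrArg re he
  have hrange : (subspace10 Φ K).restrictScalars ℝ = LinearMap.range ψ := by
    have himage :
        (fun e => proj10 Φ (1 ⊗ₜ e)) '' K = (LinearMap.range ψ : Set (ℂ ⊗[ℝ] W)) := by
      ext; simp [hψ]
    rw [subspace10_eq_span, himage, Submodule.restrictScalars_span_eq_of_I_smul_mem]
    rintro - ⟨e, rfl⟩
    exact ⟨⟨Φ e, hΦK e e.2⟩, (I_smul_proj10_tmul (hΦ2 e e.2)).symm⟩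
  have hreal : finrank ℝ (subspace10 Φ K) = finrank ℝ K := by
    rw [← LinearMap.finrank_range_of_inj hψ_inj, ← hrange]
    exact ((Submodule.restrictScalarsEquiv ℝ ℂ _ _).restrictScalars ℝ).finrank_eq.symm
  rw [← hreal, ← Module.finrank_mul_finrank ℝ ℂ, Complex.finrank_real_complex]

theorem baseChange_tmul_proj10_eq_zero (hΦK : ∀ e ∈ K, Φ e ∈ K) (hxK : ∀ e ∈ K, B x e = 0)
    {e : W} (he : e ∈ K) : B.baseChange ℂ (1 ⊗ₜ x) (proj10 Φ (1 ⊗ₜ e)) = 0 := by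
  simp [proj10_tmul, LinearMap.BilinForm.baseChange_tmul, hxK e he, hxK _ (hΦK e he)]

theorem baseChange_eq_zero_of_mem_span_tmul_sup_subspace10 (hB : B.IsSymm)
    (hskew : ∀ u v, B (Φ u) v + B u (Φ v) = 0) (hΦK : ∀ e ∈ K, Φ e ∈ K)
    (hΦ2 : ∀ e ∈ K, Φ (Φ e) = -e) (hxx : B x x = 0) (hxK : ∀ e ∈ K, B x e = 0)
    {u v : ℂ ⊗[ℝ] W} (hu : u ∈ Submodule.span ℂ {1 ⊗ₜ x} ⊔ subspace10 Φ K)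
    (hv : v ∈ Submodule.span ℂ {1 ⊗ₜ x} ⊔ subspace10 Φ K) : B.baseChange ℂ u v = 0 := by
  rw [subspace10_eq_span, ← Submodule.span_insert] at hu hv
  refine LinearMap.BilinForm.apply_eq_zero_of_mem_span _ ?_ hu hv
  rintro p (rfl | ⟨e, he, rfl⟩) q (rfl | ⟨f, hf, rfl⟩)
  · simp [LinearMap.BilinForm.baseChange_tmul, hxx]
  · exact baseChange_tmul_proj10_eq_zero hΦK hxK hf
  · simp [proj10_tmul, LinearMap.BilinForm.baseChange_tmul, hB.eq _ x, hxK e he,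
      hxK _ (hΦK e he)]
  · exact baseChange_proj10_proj10_eq_zero hskew (hΦ2 f hf) e

theorem finrank_span_tmul_sup_subspace10 [FiniteDimensional ℝ W] (hΦK : ∀ e ∈ K, Φ e ∈ K)
    (hx : x ∉ K) :
    finrank ℂ ↥(Submodule.span ℂ {1 ⊗ₜ x} ⊔ subspace10 Φ K) =
      finrank ℂ (subspace10 Φ K) + 1 := by
  have hx0 : (1 : ℂ) ⊗ₜ[ℝ] x ≠ 0 := fun h =>
    one_ne_zero ((K.tmul_mem_baseChange_iff_of_notMem hx 1).mp (h ▸ zero_mem _))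
  have hinf : Submodule.span ℂ {1 ⊗ₜ x} ⊓ subspace10 Φ K = ⊥ := by
    refine (Submodule.eq_bot_iff _).mpr fun u ⟨hu, hu'⟩ => ?_
    obtain ⟨z, rfl⟩ := Submodule.mem_span_singleton.mp hu
    rw [smul_tmul', smul_eq_mul, mul_one] at hu' ⊢
    rw [(K.tmul_mem_baseChange_iff_of_notMem hx z).mp (subspace10_le_baseChange hΦK hu'),
      zero_tmul]
  have := Submodule.finrank_sup_add_finrank_inf_eq (Submodule.span ℂ {1 ⊗ₜ x}) (subspace10 Φ K)
  rw [hinf, finrank_bot, finrank_span_singleton hx0] at this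
  omega

theorem isotropic_and_finrank_span_tmul_sup_subspace10 [FiniteDimensional ℝ W] (hB : B.IsSymm)
    (hskew : ∀ u v, B (Φ u) v + B u (Φ v) = 0) (hΦK : ∀ e ∈ K, Φ e ∈ K)
    (hΦ2 : ∀ e ∈ K, Φ (Φ e) = -e) (hxx : B x x = 0) (hxK : ∀ e ∈ K, B x e = 0) (hx : x ∉ K) :
    (∀ u ∈ Submodule.span ℂ {1 ⊗ₜ x} ⊔ subspace10 Φ K,
      ∀ v ∈ Submodule.span ℂ {1 ⊗ₜ x} ⊔ subspace10 Φ K, B.baseChange ℂ u v = 0) ∧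
    2 * finrank ℂ ↥(Submodule.span ℂ {1 ⊗ₜ x} ⊔ subspace10 Φ K) = finrank ℝ K + 2 := by
  refine ⟨fun u hu v hv => ?_, ?_⟩
  · exact baseChange_eq_zero_of_mem_span_tmul_sup_subspace10 hB hskew hΦK hΦ2 hxx hxK hu hv
  · rw [finrank_span_tmul_sup_subspace10 hΦK hx,
      finrank_eq_two_mul_finrank_subspace10 hΦK hΦ2]
    ring

end Complexification

section GeneralizedContactPair

variable {V : Type*} [AddCommGroup V] [Module ℝ V]

noncomputable def gcKer (F : V) (η : V →ₗ[ℝ] ℝ) : Submodule ℝ (V × (V →ₗ[ℝ] ℝ)) :=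
  LinearMap.ker (gcEta η) ⊓ LinearMap.ker (gcF F)

variable {B : LinearMap.BilinForm ℝ (V × (V →ₗ[ℝ] ℝ))}
  {Φ : (V × (V →ₗ[ℝ] ℝ)) →ₗ[ℝ] (V × (V →ₗ[ℝ] ℝ))} {F : V} {η : V →ₗ[ℝ] ℝ}

theorem mem_gcKer {e : V × (V →ₗ[ℝ] ℝ)} : e ∈ gcKer F η ↔ η e.1 = 0 ∧ e.2 F = 0 :=
  Iff.rfl

theorem finrank_gcKer [FiniteDimensional ℝ V] (hηF : η F = 1) :
    finrank ℝ (gcKer F η) + 2 = 2 * finrank ℝ V := by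
  rw [gcKer, finrank_ker_inf_ker_add_two (a := (F, 0)) (b := (0, η)) (by simpa [gcEta])
    (by simp [gcF]) (by simp [gcEta]) (by simpa [gcF]), Module.finrank_prod,
    Module.finrank_linearMap, Module.finrank_self, mul_one, two_mul]

theorem isSymm_of_pairing (hB : ∀ u v : V × (V →ₗ[ℝ] ℝ), B u v = (v.2 u.1 + u.2 v.1) / 2) :
    B.IsSymm :=
  ⟨fun u v => by rw [hB, hB, add_comm]⟩

theorem apply_mem_gcKer (hB : ∀ u v : V × (V →ₗ[ℝ] ℝ), B u v = (v.2 u.1 + u.2 v.1) / 2)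
    (hskew : ∀ u v : V × (V →ₗ[ℝ] ℝ), B (Φ u) v + B u (Φ v) = 0) (hΦF : Φ (F, 0) = 0)
    (hΦη : Φ (0, η) = 0) (u : V × (V →ₗ[ℝ] ℝ)) : Φ u ∈ gcKer F η :=
  mem_gcKer.mpr
    ⟨by simpa [hB, hΦη] using hskew u (0, η), by simpa [hB, hΦF] using hskew u (F, 0)⟩

theorem apply_apply_of_mem_gcKer
    (hΦ2 : ∀ u : V × (V →ₗ[ℝ] ℝ), Φ (Φ u) = -u + (η u.1 • F, u.2 F • η))
    {e : V × (V →ₗ[ℝ] ℝ)} (he : e ∈ gcKer F η) : Φ (Φ e) = -e := by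
  simp [hΦ2, (mem_gcKer.mp he).1, (mem_gcKer.mp he).2]

theorem pairing_left_eq_zero_of_mem_gcKer
    (hB : ∀ u v : V × (V →ₗ[ℝ] ℝ), B u v = (v.2 u.1 + u.2 v.1) / 2)
    {e : V × (V →ₗ[ℝ] ℝ)} (he : e ∈ gcKer F η) : B (F, 0) e = 0 := by
  simp [hB, (mem_gcKer.mp he).2]

theorem pairing_right_eq_zero_of_mem_gcKer
    (hB : ∀ u v : V × (V →ₗ[ℝ] ℝ), B u v = (v.2 u.1 + u.2 v.1) / 2)
    {e : V × (V →ₗ[ℝ] ℝ)} (he : e ∈ gcKer F η) : B (0, η) e = 0 := by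
  simp [hB, (mem_gcKer.mp he).1]

theorem gcE10_eq_subspace10 : gcE10 Φ F η = subspace10 Φ (gcKer F η) :=
  rfl

theorem gcE01_eq_subspace10_neg : gcE01 Φ F η = subspace10 (-Φ) (gcKer F η) := by
  rw [gcE01, subspace10, proj10, LinearMap.baseChange_neg, smul_neg, sub_neg_eq_add]
  rfl

end GeneralizedContactPair

theorem stmt3_general (V : Type*) [AddCommGroup V] [Module ℝ V] [FiniteDimensional ℝ V]
    (B : LinearMap.BilinForm ℝ (V × (V →ₗ[ℝ] ℝ)))
    (hB : ∀ u v : V × (V →ₗ[ℝ] ℝ), B u v = (v.2 u.1 + u.2 v.1) / 2)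
    (Φ : (V × (V →ₗ[ℝ] ℝ)) →ₗ[ℝ] (V × (V →ₗ[ℝ] ℝ)))
    (hskew : ∀ u v : V × (V →ₗ[ℝ] ℝ), B (Φ u) v + B u (Φ v) = 0)
    (F : V) (η : (V →ₗ[ℝ] ℝ))
    (hηF : η F = 1)
    (hΦF : Φ (F, 0) = 0)
    (hΦη : Φ (0, η) = 0)
    (hΦ2 : ∀ u : V × (V →ₗ[ℝ] ℝ), Φ (Φ u) = -u + (η u.1 • F, u.2 F • η)) :
    ∀ L : Submodule ℂ (ℂ ⊗[ℝ] (V × (V →ₗ[ℝ] ℝ))),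
      (L = (Submodule.span ℂ {(1 : ℂ) ⊗ₜ[ℝ] ((F, 0) : V × (V →ₗ[ℝ] ℝ))} ⊔ gcE10 Φ F η) ∨
       L = (Submodule.span ℂ {(1 : ℂ) ⊗ₜ[ℝ] ((0, η) : V × (V →ₗ[ℝ] ℝ))} ⊔ gcE01 Φ F η)) →
      (∀ u ∈ L, ∀ v ∈ L, (LinearMap.BilinForm.baseChange ℂ B) u v = 0) ∧
        Module.finrank ℂ L = Module.finrank ℝ V := by
  have hsymm := isSymm_of_pairing hB
  have hΦK : ∀ e ∈ gcKer F η, Φ e ∈ gcKer F η := fun e _ => apply_mem_gcKer hB hskew hΦF hΦη e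
  have hΦ2K : ∀ e ∈ gcKer F η, Φ (Φ e) = -e := fun e => apply_apply_of_mem_gcKer hΦ2
  have hrank := finrank_gcKer hηF
  rintro L (rfl | rfl)
  · rw [gcE10_eq_subspace10]
    obtain ⟨hiso, hdimL⟩ := isotropic_and_finrank_span_tmul_sup_subspace10 hsymm hskew hΦK hΦ2K
      (by simp [hB]) (fun e => pairing_left_eq_zero_of_mem_gcKer hB) (by simp [mem_gcKer, hηF])
    exact ⟨hiso, by omega⟩
  · have hskew' : ∀ u v, B ((-Φ) u) v + B u ((-Φ) v) = 0 := fun u v => by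
      simp only [LinearMap.neg_apply, map_neg, LinearMap.neg_apply]
      linarith [hskew u v]
    rw [gcE01_eq_subspace10_neg]
    obtain ⟨hiso, hdimL⟩ := isotropic_and_finrank_span_tmul_sup_subspace10 hsymm hskew'
      (fun e he => neg_mem (hΦK e he)) (fun e he => by simpa using hΦ2K e he)
      (by simp [hB]) (fun e => pairing_right_eq_zero_of_mem_gcKer hB) (by simp [mem_gcKer, hηF])
    exact ⟨hiso, by omega⟩

/-- `L = ℂ·F ⊕ E^{1,0}` and `L* = ℂ·η ⊕ E^{0,1}` are maximally isotropic:
each is isotropic of complex dimension `dim V = 2n+1`. -/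
theorem stmt3 (V : Type*) [AddCommGroup V] [Module ℝ V] [FiniteDimensional ℝ V]
    (n : ℕ) (hdim : Module.finrank ℝ V = 2 * n + 1)
    (B : LinearMap.BilinForm ℝ (V × (V →ₗ[ℝ] ℝ)))
    (hB : ∀ u v : V × (V →ₗ[ℝ] ℝ), B u v = (v.2 u.1 + u.2 v.1) / 2)
    (Φ : (V × (V →ₗ[ℝ] ℝ)) →ₗ[ℝ] (V × (V →ₗ[ℝ] ℝ)))
    (hskew : ∀ u v : V × (V →ₗ[ℝ] ℝ), B (Φ u) v + B u (Φ v) = 0)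
    (F : V) (η : (V →ₗ[ℝ] ℝ))
    (hηF : η F = 1)
    (hΦF : Φ (F, 0) = 0)
    (hΦη : Φ (0, η) = 0)
    (hΦ2 : ∀ u : V × (V →ₗ[ℝ] ℝ), Φ (Φ u) = -u + (η u.1 • F, u.2 F • η)) :
    ∀ L : Submodule ℂ (ℂ ⊗[ℝ] (V × (V →ₗ[ℝ] ℝ))),
      (L = (Submodule.span ℂ {(1 : ℂ) ⊗ₜ[ℝ] ((F, 0) : V × (V →ₗ[ℝ] ℝ))} ⊔ gcE10 Φ F η) ∨
       L = (Submodule.span ℂ {(1 : ℂ) ⊗ₜ[ℝ] ((0, η) : V × (V →ₗ[ℝ] ℝ))} ⊔ gcE01 Φ F η)) →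
      (∀ u ∈ L, ∀ v ∈ L, (LinearMap.BilinForm.baseChange ℂ B) u v = 0) ∧
        Module.finrank ℂ L = Module.finrank ℝ V :=
  stmt3_general V B hB Φ hskew F η hηF hΦF hΦη hΦ2
end

section
/- Let (Φ, F+η) be a generalized almost contact pair on the (2n+1)-dimensional vector space V. Then (V⊕V*)_ℂ decomposes as a direct sum ℂ·F ⊕ ℂ·η ⊕ E^{1,0} ⊕ E^{0,1}, where E^{1,0} is the +i eigenspace of Φ, E^{0,1} is the −i eigenspace, and ℂ·F ⊕ ℂ·η is the 0-eigenspace. -/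
open TensorProduct

/-!
`Φ` is an f-structure, `Φ³ = -Φ`: indeed `Φ² + 1 = F ⊙ η` is killed by `Φ`. For such an
endomorphism `ker Φ = im (Φ² + 1) = ℝF ⊕ ℝη`, `im Φ = ker (Φ² + 1) = ker η ⊕ ker F`, and the two
together span the whole space. After complexification `Φ² = -1` on `im Φ`, so `e ↦ e ∓ iΦe` maps
`im Φ` onto the `±i`-eigenspace, and `e = ½(e - iΦe) + ½(e + iΦe)` splits `im Φ` into
`E^{1,0} ⊕ E^{0,1}`. Independence comes from that of eigenspaces for the distinct eigenvalues
`0, i, -i`, together with `ℂF ∩ ℂη = 0`.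
-/

namespace Module.End

variable {K M : Type*} [Field K] [AddCommGroup M] [Module K M] {J : Module.End K M} {c : K}

lemma apply_apply_apply_eq_neg (hJ : J ^ 3 = -J) (x : M) : J (J (J x)) = -J x := by
  simpa [pow_succ] using LinearMap.congr_fun hJ x

lemma ker_eq_range_sq_add_one (hJ : J ^ 3 = -J) :
    LinearMap.ker J = LinearMap.range (J ^ 2 + 1) := by
  apply le_antisymm
  · intro x hx
    exact ⟨x, by simp_all [pow_two]⟩
  · rintro _ ⟨x, rfl⟩
    simp [pow_two, apply_apply_apply_eq_neg hJ]

lemma range_eq_ker_sq_add_one (hJ : J ^ 3 = -J) :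
    LinearMap.range J = LinearMap.ker (J ^ 2 + 1) := by
  apply le_antisymm
  · rintro _ ⟨x, rfl⟩
    simp [pow_two, apply_apply_apply_eq_neg hJ]
  · intro x hx
    refine ⟨-J x, ?_⟩
    simp only [LinearMap.mem_ker, LinearMap.add_apply, pow_two, mul_apply, one_apply] at hx
    rw [map_neg, neg_eq_iff_eq_neg, ← add_eq_zero_iff_eq_neg, hx]

lemma ker_sup_range_eq_top (hJ : J ^ 3 = -J) : LinearMap.ker J ⊔ LinearMap.range J = ⊤ := by
  refine eq_top_iff.2 fun x _ => ?_
  have hx : x = (J ^ 2 + 1 : Module.End K M) x + J (-J x) := by simp [pow_two]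
  rw [hx, ker_eq_range_sq_add_one hJ]
  exact Submodule.add_mem_sup (LinearMap.mem_range_self _ _) (LinearMap.mem_range_self _ _)

lemma map_sub_smul_range_eq_eigenspace (hJ : J ^ 3 = -J) (hc : c * c = -1) (h2 : (2 : K) ≠ 0) :
    (LinearMap.range J).map (LinearMap.id - c • J) = J.eigenspace c := by
  apply le_antisymm
  · rintro _ ⟨_, ⟨y, rfl⟩, rfl⟩
    rw [mem_eigenspace_iff]
    simp only [LinearMap.sub_apply, LinearMap.id_apply, LinearMap.smul_apply, map_sub, map_smul,
      apply_apply_apply_eq_neg hJ, smul_sub, smul_smul, hc, smul_neg, neg_smul, one_smul]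
    abel
  · intro v hv
    rw [mem_eigenspace_iff] at hv
    refine ⟨(2 : K)⁻¹ • v, ⟨(-(2 : K)⁻¹ * c) • v, ?_⟩, ?_⟩
    · rw [map_smul, hv, smul_smul, mul_assoc, hc]; module
    · rw [LinearMap.sub_apply, LinearMap.id_apply, LinearMap.smul_apply, map_smul, hv, smul_smul,
        smul_smul, mul_comm c, mul_assoc, hc]
      match_scalars
      field_simp
      ring

lemma map_add_smul_range_eq_eigenspace_neg (hJ : J ^ 3 = -J) (hc : c * c = -1)
    (h2 : (2 : K) ≠ 0) : (LinearMap.range J).map (LinearMap.id + c • J) = J.eigenspace (-c) := by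
  rw [← map_sub_smul_range_eq_eigenspace hJ (by rw [neg_mul_neg, hc]) h2, neg_smul,
    sub_neg_eq_add]

lemma le_map_sub_smul_sup_map_add_smul (h2 : (2 : K) ≠ 0) (p : Submodule K M) :
    p ≤ p.map (LinearMap.id - c • J) ⊔ p.map (LinearMap.id + c • J) := by
  intro x hx
  have : x = (LinearMap.id - c • J : Module.End K M) ((2 : K)⁻¹ • x) +
      (LinearMap.id + c • J : Module.End K M) ((2 : K)⁻¹ • x) := by
    simp only [LinearMap.sub_apply, LinearMap.add_apply, LinearMap.id_apply,
      LinearMap.smul_apply]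
    match_scalars <;> field_simp <;> ring
  rw [this]
  exact Submodule.add_mem_sup ⟨_, p.smul_mem _ hx, rfl⟩ ⟨_, p.smul_mem _ hx, rfl⟩

lemma eigenspace_zero_sup_eigenspace_sup_eigenspace_neg (hJ : J ^ 3 = -J) (hc : c * c = -1)
    (h2 : (2 : K) ≠ 0) : J.eigenspace 0 ⊔ J.eigenspace c ⊔ J.eigenspace (-c) = ⊤ := by
  rw [eq_top_iff, ← ker_sup_range_eq_top hJ, eigenspace_zero, sup_assoc,
    ← map_sub_smul_range_eq_eigenspace hJ hc h2, ← map_add_smul_range_eq_eigenspace_neg hJ hc h2]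
  exact sup_le_sup_left (le_map_sub_smul_sup_map_add_smul h2 _) _

end Module.End

lemma iSupIndep_fin_four_of_disjoint {α : Type*} [CompleteLattice α] [IsModularLattice α]
    {f : Fin 4 → α} (h01 : Disjoint (f 0) (f 1)) (h : iSupIndep ![f 0 ⊔ f 1, f 2, f 3]) :
    iSupIndep f := by
  rw [iSupIndep_iff_supIndep_univ] at h ⊢
  have hunion : (Finset.univ : Finset (Fin 3)).biUnion ![({0, 1} : Finset (Fin 4)), {2}, {3}] =
      Finset.univ := by
    decide
  rw [← hunion]
  refine Finset.SupIndep.biUnion (h.mono fun k _ => ?_) fun k _ => ?_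
  · fin_cases k <;> simp
  · fin_cases k
    · exact (Finset.supIndep_pair (by decide)).2 h01
    · exact Finset.supIndep_singleton _ _
    · exact Finset.supIndep_singleton _ _

lemma LinearMap.range_baseChange {R A M N : Type*} [CommRing R] [Ring A] [Algebra R A]
    [AddCommGroup M] [Module R M] [AddCommGroup N] [Module R N] (f : M →ₗ[R] N) :
    range (f.baseChange A) = (range f).baseChange A := by
  conv_lhs => rw [← subtype_comp_codRestrict (f := f) (range f) (mem_range_self f)]
  rw [baseChange_comp, range_comp_of_range_eq_top, Submodule.baseChange]
  exact range_eq_top.2 (baseChange_surjective A f.surjective_rangeRestrict)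

namespace GeneralizedAlmostContactPair

open LinearMap Submodule

variable {V : Type*} [AddCommGroup V] [Module ℝ V]
  {Φ : (V × (V →ₗ[ℝ] ℝ)) →ₗ[ℝ] (V × (V →ₗ[ℝ] ℝ))} {F : V} {η : V →ₗ[ℝ] ℝ}

lemma sq_add_one_apply (hΦ2 : ∀ u : V × (V →ₗ[ℝ] ℝ), Φ (Φ u) = -u + (η u.1 • F, u.2 F • η))
    (u : V × (V →ₗ[ℝ] ℝ)) :
    (Φ ^ 2 + 1 : Module.End ℝ (V × (V →ₗ[ℝ] ℝ))) u =
      η u.1 • ((F, 0) : V × (V →ₗ[ℝ] ℝ)) + u.2 F • ((0, η) : V × (V →ₗ[ℝ] ℝ)) := by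
  rw [LinearMap.add_apply, pow_two, Module.End.mul_apply, Module.End.one_apply, hΦ2]
  ext <;> simp

lemma pow_three_eq_neg (hΦ2 : ∀ u : V × (V →ₗ[ℝ] ℝ), Φ (Φ u) = -u + (η u.1 • F, u.2 F • η))
    (hΦF : Φ (F, 0) = 0) (hΦη : Φ (0, η) = 0) : Φ ^ 3 = -Φ := by
  refine LinearMap.ext fun u => ?_
  have h := congrArg Φ (sq_add_one_apply hΦ2 u)
  rw [map_add, map_smul, map_smul, hΦF, hΦη, smul_zero, smul_zero, add_zero, LinearMap.add_apply,
    Module.End.one_apply, map_add, pow_two, Module.End.mul_apply] at h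
  rw [pow_succ, Module.End.mul_apply, pow_two, Module.End.mul_apply, LinearMap.neg_apply,
    ← add_eq_zero_iff_eq_neg, h]

lemma ker_sq_add_one (hηF : η F = 1)
    (hΦ2 : ∀ u : V × (V →ₗ[ℝ] ℝ), Φ (Φ u) = -u + (η u.1 • F, u.2 F • η)) :
    ker (Φ ^ 2 + 1 : Module.End ℝ (V × (V →ₗ[ℝ] ℝ))) = ker (gcEta η) ⊓ ker (gcF F) := by
  have hF : F ≠ 0 := by rintro rfl; simp at hηF
  have hη : η ≠ 0 := by rintro rfl; simp at hηF
  ext u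
  simp [sq_add_one_apply hΦ2, gcEta, gcF, Prod.ext_iff, hF, hη]

lemma range_sq_add_one (hηF : η F = 1)
    (hΦ2 : ∀ u : V × (V →ₗ[ℝ] ℝ), Φ (Φ u) = -u + (η u.1 • F, u.2 F • η)) :
    range (Φ ^ 2 + 1 : Module.End ℝ (V × (V →ₗ[ℝ] ℝ))) =
      span ℝ {((F, 0) : V × (V →ₗ[ℝ] ℝ)), (0, η)} := by
  apply le_antisymm
  · rintro _ ⟨u, rfl⟩
    rw [sq_add_one_apply hΦ2]
    exact add_mem (smul_mem _ _ (subset_span (by simp))) (smul_mem _ _ (subset_span (by simp)))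
  · rw [span_le]
    rintro _ (rfl | rfl)
    · exact ⟨(F, 0), by simp [sq_add_one_apply hΦ2, hηF]⟩
    · exact ⟨(0, η), by simp [sq_add_one_apply hΦ2, hηF]⟩

lemma baseChange_pow_three_eq_neg
    (hΦ2 : ∀ u : V × (V →ₗ[ℝ] ℝ), Φ (Φ u) = -u + (η u.1 • F, u.2 F • η))
    (hΦF : Φ (F, 0) = 0) (hΦη : Φ (0, η) = 0) : Φ.baseChange ℂ ^ 3 = -Φ.baseChange ℂ := by
  rw [← baseChange_pow, pow_three_eq_neg hΦ2 hΦF hΦη, baseChange_neg]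

lemma gcKerC_eq_range_baseChange (hηF : η F = 1)
    (hΦ2 : ∀ u : V × (V →ₗ[ℝ] ℝ), Φ (Φ u) = -u + (η u.1 • F, u.2 F • η))
    (hΦF : Φ (F, 0) = 0) (hΦη : Φ (0, η) = 0) : gcKerC F η = range (Φ.baseChange ℂ) := by
  rw [gcKerC, ← ker_sq_add_one hηF hΦ2,
    ← Module.End.range_eq_ker_sq_add_one (pow_three_eq_neg hΦ2 hΦF hΦη), range_baseChange]

lemma ker_baseChange_eq_sup_span (hηF : η F = 1)
    (hΦ2 : ∀ u : V × (V →ₗ[ℝ] ℝ), Φ (Φ u) = -u + (η u.1 • F, u.2 F • η))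
    (hΦF : Φ (F, 0) = 0) (hΦη : Φ (0, η) = 0) :
    ker (Φ.baseChange ℂ) = span ℂ {(1 : ℂ) ⊗ₜ[ℝ] ((F, 0) : V × (V →ₗ[ℝ] ℝ))} ⊔
      span ℂ {(1 : ℂ) ⊗ₜ[ℝ] ((0, η) : V × (V →ₗ[ℝ] ℝ))} := by
  rw [Module.End.ker_eq_range_sq_add_one (baseChange_pow_three_eq_neg hΦ2 hΦF hΦη),
    ← baseChange_pow, ← baseChange_one, ← baseChange_add, range_baseChange,
    range_sq_add_one hηF hΦ2, baseChange_span, Set.image_pair, span_insert]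
  rfl

lemma disjoint_span_F_span_eta (hηF : η F = 1) :
    Disjoint (span ℂ {(1 : ℂ) ⊗ₜ[ℝ] ((F, 0) : V × (V →ₗ[ℝ] ℝ))})
      (span ℂ {(1 : ℂ) ⊗ₜ[ℝ] ((0, η) : V × (V →ₗ[ℝ] ℝ))}) := by
  rw [disjoint_span_singleton]
  intro h
  obtain ⟨c, hc⟩ := mem_span_singleton.1 h
  have := congrArg (liftBaseChange ℂ (Algebra.linearMap ℝ ℂ ∘ₗ gcF F)) hc
  simp [gcF, hηF] at this

end GeneralizedAlmostContactPair

open GeneralizedAlmostContactPair Module.End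

theorem stmt4_general (V : Type*) [AddCommGroup V] [Module ℝ V]
    (Φ : (V × (V →ₗ[ℝ] ℝ)) →ₗ[ℝ] (V × (V →ₗ[ℝ] ℝ)))
    (F : V) (η : V →ₗ[ℝ] ℝ)
    (hηF : η F = 1)
    (hΦF : Φ (F, 0) = 0)
    (hΦη : Φ (0, η) = 0)
    (hΦ2 : ∀ u : V × (V →ₗ[ℝ] ℝ), Φ (Φ u) = -u + (η u.1 • F, u.2 F • η)) :
    ∀ S : Fin 4 → Submodule ℂ (ℂ ⊗[ℝ] (V × (V →ₗ[ℝ] ℝ))),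
      S 0 = Submodule.span ℂ {(1 : ℂ) ⊗ₜ[ℝ] ((F, 0) : V × (V →ₗ[ℝ] ℝ))} →
      S 1 = Submodule.span ℂ {(1 : ℂ) ⊗ₜ[ℝ] ((0, η) : V × (V →ₗ[ℝ] ℝ))} →
      S 2 = gcE10 Φ F η → S 3 = gcE01 Φ F η →
      (iSupIndep S ∧ (⨆ i, S i) = ⊤) ∧
        gcE10 Φ F η = Module.End.eigenspace (Φ.baseChange ℂ) Complex.I ∧
        gcE01 Φ F η = Module.End.eigenspace (Φ.baseChange ℂ) (-Complex.I) ∧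
        S 0 ⊔ S 1 = Module.End.eigenspace (Φ.baseChange ℂ) 0 := by
  intro S hS0 hS1 hS2 hS3
  have hJ := baseChange_pow_three_eq_neg hΦ2 hΦF hΦη
  have hK := gcKerC_eq_range_baseChange hηF hΦ2 hΦF hΦη
  have hE10 : gcE10 Φ F η = eigenspace (Φ.baseChange ℂ) Complex.I := by
    rw [gcE10, gcProj10, hK, map_sub_smul_range_eq_eigenspace hJ Complex.I_mul_I two_ne_zero]
  have hE01 : gcE01 Φ F η = eigenspace (Φ.baseChange ℂ) (-Complex.I) := by
    rw [gcE01, gcProj01, hK, map_add_smul_range_eq_eigenspace_neg hJ Complex.I_mul_I two_ne_zero]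
  have hE0 : S 0 ⊔ S 1 = eigenspace (Φ.baseChange ℂ) 0 := by
    rw [hS0, hS1, eigenspace_zero, ker_baseChange_eq_sup_span hηF hΦ2 hΦF hΦη]
  have hiSup : ⨆ i, S i = S 0 ⊔ S 1 ⊔ S 2 ⊔ S 3 := by
    simp [← Finset.sup_univ_eq_iSup, Fin.univ_succ, sup_assoc]
  refine ⟨⟨iSupIndep_fin_four_of_disjoint ?_ ?_, ?_⟩, hE10, hE01, hE0⟩
  · rw [hS0, hS1]
    exact disjoint_span_F_span_eta hηF
  · rw [hE0, hS2, hS3, hE10, hE01]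
    have hinj : Function.Injective ![0, Complex.I, -Complex.I] := fun i j h => by
      fin_cases i <;> fin_cases j <;>
        simp [self_eq_neg, neg_eq_self, eq_comm (a := (0 : ℂ))] at h ⊢
    convert (eigenspaces_iSupIndep (Φ.baseChange ℂ)).comp hinj using 1
    funext i
    fin_cases i <;> rfl
  · rw [hiSup, hE0, hS2, hS3, hE10, hE01,
      eigenspace_zero_sup_eigenspace_sup_eigenspace_neg hJ Complex.I_mul_I two_ne_zero]

/-- `(V ⊕ V*)_ℂ = ℂ·F ⊕ ℂ·η ⊕ E^{1,0} ⊕ E^{0,1}`, where `E^{1,0}` is the `+i`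
eigenspace of `Φ`, `E^{0,1}` the `−i` eigenspace, and `ℂ·F ⊕ ℂ·η` the `0`-eigenspace. -/
theorem stmt4 (V : Type*) [AddCommGroup V] [Module ℝ V] [FiniteDimensional ℝ V]
    (n : ℕ) (hdim : Module.finrank ℝ V = 2 * n + 1)
    (B : LinearMap.BilinForm ℝ (V × (V →ₗ[ℝ] ℝ)))
    (hB : ∀ u v : V × (V →ₗ[ℝ] ℝ), B u v = (v.2 u.1 + u.2 v.1) / 2)
    (Φ : (V × (V →ₗ[ℝ] ℝ)) →ₗ[ℝ] (V × (V →ₗ[ℝ] ℝ)))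
    (hskew : ∀ u v : V × (V →ₗ[ℝ] ℝ), B (Φ u) v + B u (Φ v) = 0)
    (F : V) (η : V →ₗ[ℝ] ℝ)
    (hηF : η F = 1)
    (hΦF : Φ (F, 0) = 0)
    (hΦη : Φ (0, η) = 0)
    (hΦ2 : ∀ u : V × (V →ₗ[ℝ] ℝ), Φ (Φ u) = -u + (η u.1 • F, u.2 F • η)) :
    ∀ S : Fin 4 → Submodule ℂ (ℂ ⊗[ℝ] (V × (V →ₗ[ℝ] ℝ))),
      S 0 = Submodule.span ℂ {(1 : ℂ) ⊗ₜ[ℝ] ((F, 0) : V × (V →ₗ[ℝ] ℝ))} →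
      S 1 = Submodule.span ℂ {(1 : ℂ) ⊗ₜ[ℝ] ((0, η) : V × (V →ₗ[ℝ] ℝ))} →
      S 2 = gcE10 Φ F η → S 3 = gcE01 Φ F η →
      (iSupIndep S ∧ (⨆ i, S i) = ⊤) ∧
        gcE10 Φ F η = Module.End.eigenspace (Φ.baseChange ℂ) Complex.I ∧
        gcE01 Φ F η = Module.End.eigenspace (Φ.baseChange ℂ) (-Complex.I) ∧
        S 0 ⊔ S 1 = Module.End.eigenspace (Φ.baseChange ℂ) 0 :=
  stmt4_general V Φ F η hηF hΦF hΦη hΦ2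
end

section
/- In the Darboux model with θ = Σ_{j=1}^n dx_j∧dy_j viewed as a 2-form on the 2n-dimensional space W = span{X_j,Y_j} ⊕ span{dx_j,dy_j} equipped with the complex structure Φ|_W (Φ(X_j)=dy_j, Φ(Y_j)=−dx_j, Φ(dx_j)=Y_j, Φ(dy_j)=−X_j), the pull-back ρ*θ of θ (extended by ρ*θ(X+α, Y+β) := θ(X,Y)) decomposes with (2,0)-part (1/4)Σ(dx_j−iY_j)∧(dy_j+iX_j), (0,2)-part (1/4)Σ(dx_j+iY_j)∧(dy_j−iX_j), and (1,1)-part (1/2)(θ+π) where π = Σ X_j∧Y_j; in particular the (2,0)-part is nonzero (for n ≥ 1). -/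
/-- The complexification of the Darboux space `W = span{X_j,Y_j} ⊕ span{dx_j,dy_j}`:
an element `(a, b, p, q)` stands for `Σ a_j X_j + Σ b_j Y_j + Σ p_j dx_j + Σ q_j dy_j`. -/
abbrev DarbouxWC (n : ℕ) :=
  (Fin n → ℂ) × (Fin n → ℂ) × (Fin n → ℂ) × (Fin n → ℂ)

/-- The complex structure `Φ` on `W`: `Φ(X_j)=dy_j`, `Φ(Y_j)=−dx_j`,
`Φ(dx_j)=Y_j`, `Φ(dy_j)=−X_j` (extended ℂ-linearly). -/
noncomputable def darbouxWPhi {n : ℕ} (u : DarbouxWC n) : DarbouxWC n :=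
  ((fun j => -(u.2.2.2 j)), u.2.2.1, (fun j => -(u.2.1 j)), u.1)

/-- The pull-back `ρ*θ` of `θ = Σ dx_j∧dy_j`, evaluating `θ` on the vector
components, extended ℂ-bilinearly. -/
noncomputable def darbouxWB {n : ℕ} (u v : DarbouxWC n) : ℂ :=
  ∑ j, (u.1 j * v.2.1 j - v.1 j * u.2.1 j)

/-- Projection onto the `+i` eigenspace of `Φ`: `P(u) = ½(u − iΦu)`. -/
noncomputable def darbouxWP {n : ℕ} (u : DarbouxWC n) : DarbouxWC n :=
  ((2 : ℂ)⁻¹) • (u - Complex.I • darbouxWPhi u)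

/-- Projection onto the `−i` eigenspace of `Φ`: `Q(u) = ½(u + iΦu)`. -/
noncomputable def darbouxWQ {n : ℕ} (u : DarbouxWC n) : DarbouxWC n :=
  ((2 : ℂ)⁻¹) • (u + Complex.I • darbouxWPhi u)

/-!
`ρ*θ` only reads the `dx`- and `dy`-coefficients of its arguments, and on these the
projections onto the `∓i` eigenspaces of `Φ` act as `a ↦ ½(a ∓ i q)`, `b ↦ ½(b ± i p)`.
Each type component is therefore `θ` evaluated on these mixed coordinates, and the
identities are coordinatewise ring identities (using `i² = -1` for the `(1,1)`-part).
Evaluating the `(2,0)`-part on `Σ X_j` and `Σ Y_j` gives `n / 4 ≠ 0`.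
-/

namespace DarbouxW

open Complex

variable {n : ℕ}

@[simp]
lemma darbouxWQ_fst_apply (u : DarbouxWC n) (j : Fin n) :
    (darbouxWQ u).1 j = 2⁻¹ * (u.1 j - I * u.2.2.2 j) := by
  simp only [darbouxWQ, darbouxWPhi, Prod.smul_fst, Prod.fst_add, Pi.smul_apply,
    Pi.add_apply, smul_eq_mul]
  ring

@[simp]
lemma darbouxWQ_snd_fst_apply (u : DarbouxWC n) (j : Fin n) :
    (darbouxWQ u).2.1 j = 2⁻¹ * (u.2.1 j + I * u.2.2.1 j) := by
  simp only [darbouxWQ, darbouxWPhi, Prod.smul_snd, Prod.smul_fst, Prod.snd_add, Prod.fst_add,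
    Pi.smul_apply, Pi.add_apply, smul_eq_mul]

@[simp]
lemma darbouxWP_fst_apply (u : DarbouxWC n) (j : Fin n) :
    (darbouxWP u).1 j = 2⁻¹ * (u.1 j + I * u.2.2.2 j) := by
  simp only [darbouxWP, darbouxWPhi, Prod.smul_fst, Prod.fst_sub, Pi.smul_apply, Pi.sub_apply,
    smul_eq_mul]
  ring

@[simp]
lemma darbouxWP_snd_fst_apply (u : DarbouxWC n) (j : Fin n) :
    (darbouxWP u).2.1 j = 2⁻¹ * (u.2.1 j - I * u.2.2.1 j) := by
  simp only [darbouxWP, darbouxWPhi, Prod.smul_snd, Prod.smul_fst, Prod.snd_sub, Prod.fst_sub,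
    Pi.smul_apply, Pi.sub_apply, smul_eq_mul]

lemma darbouxWB_darbouxWQ (u v : DarbouxWC n) :
    darbouxWB (darbouxWQ u) (darbouxWQ v) =
      4⁻¹ * ∑ j, ((u.1 j - I * u.2.2.2 j) * (v.2.1 j + I * v.2.2.1 j) -
        (v.1 j - I * v.2.2.2 j) * (u.2.1 j + I * u.2.2.1 j)) := by
  simp only [darbouxWB, darbouxWQ_fst_apply, darbouxWQ_snd_fst_apply, Finset.mul_sum]
  exact Finset.sum_congr rfl fun j _ => by ring

lemma darbouxWB_darbouxWP (u v : DarbouxWC n) :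
    darbouxWB (darbouxWP u) (darbouxWP v) =
      4⁻¹ * ∑ j, ((u.1 j + I * u.2.2.2 j) * (v.2.1 j - I * v.2.2.1 j) -
        (v.1 j + I * v.2.2.2 j) * (u.2.1 j - I * u.2.2.1 j)) := by
  simp only [darbouxWB, darbouxWP_fst_apply, darbouxWP_snd_fst_apply, Finset.mul_sum]
  exact Finset.sum_congr rfl fun j _ => by ring

lemma darbouxWB_darbouxWP_darbouxWQ_add (u v : DarbouxWC n) :
    darbouxWB (darbouxWP u) (darbouxWQ v) + darbouxWB (darbouxWQ u) (darbouxWP v) =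
      2⁻¹ * ((∑ j, (u.1 j * v.2.1 j - v.1 j * u.2.1 j)) +
        ∑ j, (u.2.2.1 j * v.2.2.2 j - v.2.2.1 j * u.2.2.2 j)) := by
  simp only [darbouxWB, darbouxWP_fst_apply, darbouxWP_snd_fst_apply, darbouxWQ_fst_apply,
    darbouxWQ_snd_fst_apply, ← Finset.sum_add_distrib, Finset.mul_sum]
  refine Finset.sum_congr rfl fun j _ => ?_
  linear_combination (u.2.2.2 j * v.2.2.1 j - v.2.2.2 j * u.2.2.1 j) / 2 * I_mul_I

lemma darbouxWB_darbouxWQ_ne_zero (hn : 0 < n) :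
    darbouxWB (darbouxWQ ((fun _ => 1, 0, 0, 0) : DarbouxWC n)) (darbouxWQ (0, fun _ => 1, 0, 0))
      ≠ 0 := by
  simp [darbouxWB_darbouxWQ, hn.ne']

end DarbouxW

/-- The `(2,0)`-component of a 2-form is read off on `E^{0,1}`-arguments, i.e. through `Q`, and
the `(0,2)`-component through `P`. -/
theorem stmt17 (n : ℕ) :
    (∀ u v : DarbouxWC n,
        darbouxWB (darbouxWQ u) (darbouxWQ v) =
          (4 : ℂ)⁻¹ * ∑ j,
            ((u.1 j - Complex.I * u.2.2.2 j) * (v.2.1 j + Complex.I * v.2.2.1 j) -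
              (v.1 j - Complex.I * v.2.2.2 j) * (u.2.1 j + Complex.I * u.2.2.1 j))) ∧
      (∀ u v : DarbouxWC n,
        darbouxWB (darbouxWP u) (darbouxWP v) =
          (4 : ℂ)⁻¹ * ∑ j,
            ((u.1 j + Complex.I * u.2.2.2 j) * (v.2.1 j - Complex.I * v.2.2.1 j) -
              (v.1 j + Complex.I * v.2.2.2 j) * (u.2.1 j - Complex.I * u.2.2.1 j))) ∧
      (∀ u v : DarbouxWC n,
        darbouxWB (darbouxWP u) (darbouxWQ v) + darbouxWB (darbouxWQ u) (darbouxWP v) =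
          (2 : ℂ)⁻¹ * ((∑ j, (u.1 j * v.2.1 j - v.1 j * u.2.1 j)) +
            ∑ j, (u.2.2.1 j * v.2.2.2 j - v.2.2.1 j * u.2.2.2 j))) ∧
      (0 < n → ∃ u v : DarbouxWC n, darbouxWB (darbouxWQ u) (darbouxWQ v) ≠ 0) :=
  ⟨DarbouxW.darbouxWB_darbouxWQ, DarbouxW.darbouxWB_darbouxWP,
    DarbouxW.darbouxWB_darbouxWP_darbouxWQ_add,
    fun hn => ⟨_, _, DarbouxW.darbouxWB_darbouxWQ_ne_zero hn⟩⟩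
end
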